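/- arXiv:2105.01609 — 3 statements merged into one kernel-verified Lean document; each statement's English description precedes it below -/
import Mathlib

section
/- Key step in the upper bound for consensus 1/k-division: Let u: G → ℝ_{≥0} be an additive utility on a set G of m > 3Tk goods (T, k positive integers). Let S be a set of L = 3Tk goods of highest u-value and p = min_{ℓ∈S} u(ℓ). Let (A_1,…,A_k) be a partition of G such that for every i ∈ [k]: |L/k − |A_i ∩ S|| ≤ T and |u(G \ S)/k − u(A_i \ S)| ≤ p·T. Then for every pair i, i' ∈ [k], setting B = A_{i'} ∩ S (which has size at most L/k + T ≤ 4T), one has u(A_i) ≥ u(A_{i'} \ B). -/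
open Finset

/-- Key step of the consensus-division upper bound: if the "large" goods `S`
(the `L = 3Tk` goods of highest value, with minimum value `p` on `S`) are nearly
balanced across bundles and the "small" goods are balanced up to `p·T` in value,
then removing `B = A_{i'} ∩ S` (of size at most `4T`) from any bundle `A_{i'}`
makes any bundle `A_i` weakly preferred. -/
theorem consensus_key_step
    {m T k : ℕ} (hT : 0 < T) (hk : 0 < k) (hm : 3 * T * k < m)
    (u : Fin m → ℝ) (hu : ∀ ℓ, u ℓ ∈ Set.Icc (0 : ℝ) 1)
    (S : Finset (Fin m)) (hS : S.card = 3 * T * k)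
    (p : ℝ) (hp0 : 0 ≤ p)
    (hpS : ∀ ℓ ∈ S, p ≤ u ℓ) (hpmem : ∃ ℓ ∈ S, u ℓ = p)
    (hpO : ∀ ℓ ∉ S, u ℓ ≤ p)
    (A : Fin k → Finset (Fin m))
    (hlarge : ∀ i, |((3 * T * k : ℕ) : ℝ) / k - ((A i ∩ S).card : ℝ)| ≤ T)
    (hsmall : ∀ i, |(∑ ℓ ∈ Finset.univ \ S, u ℓ) / k - ∑ ℓ ∈ A i \ S, u ℓ| ≤ p * T) :
    ∀ i i' : Fin k,
      ((A i' ∩ S).card : ℝ) ≤ ((3 * T * k : ℕ) : ℝ) / k + T ∧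
      ((3 * T * k : ℕ) : ℝ) / k + T ≤ 4 * T ∧
      ∑ ℓ ∈ A i, u ℓ ≥ ∑ ℓ ∈ A i' \ (A i' ∩ S), u ℓ := by
  intro i i'
  have hkR : (0:ℝ) < k := by exact_mod_cast hk
  have hdiv : ((3 * T * k : ℕ) : ℝ) / k = 3 * T := by
    push_cast; field_simp
  have h1 := abs_le.1 (hlarge i)
  have h1' := abs_le.1 (hlarge i')
  have h2 := abs_le.1 (hsmall i)
  have h2' := abs_le.1 (hsmall i')
  refine ⟨by linarith [h1'.1], by rw [hdiv]; linarith, ?_⟩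
  have hsd : A i' \ (A i' ∩ S) = A i' \ S := by
    ext x; simp [Finset.mem_sdiff]
  rw [hsd]
  -- split sum over A i
  have hsplit : ∑ ℓ ∈ A i, u ℓ = (∑ ℓ ∈ A i ∩ S, u ℓ) + ∑ ℓ ∈ A i \ S, u ℓ := by
    rw [← Finset.sum_inter_add_sum_sdiff (A i) S u]
  have hlb : p * ((A i ∩ S).card : ℝ) ≤ ∑ ℓ ∈ A i ∩ S, u ℓ := by
    calc p * ((A i ∩ S).card : ℝ) = ∑ _ℓ ∈ A i ∩ S, p := by
          rw [Finset.sum_const]; ring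
      _ ≤ ∑ ℓ ∈ A i ∩ S, u ℓ :=
          Finset.sum_le_sum fun ℓ hℓ => hpS ℓ (Finset.mem_inter.1 hℓ).2
  have hcard : (2 * T : ℝ) ≤ ((A i ∩ S).card : ℝ) := by
    have := h1.2; rw [hdiv] at this; linarith
  have h2T : p * (2 * T) ≤ p * ((A i ∩ S).card : ℝ) :=
    mul_le_mul_of_nonneg_left hcard hp0
  rw [hsplit]
  nlinarith [h2.1, h2'.2]
end

section
/- Lower-bound reduction via groups of sizes (2n', 1, …, 1): Suppose A ∈ [0,1]^{n'×m} and Δ ≥ 1 an integer. Define k groups of agents: group 1 has 2n' agents with u^{(1,j)}(ℓ) = A_{j,ℓ} and u^{(1,j+n')}(ℓ) = 1 − A_{j,ℓ} for j ∈ [n']; groups 2,…,k each have one agent valuing every good at 1. If an allocation (A_1,…,A_k) is proportional up to Δ−1 goods for all these agents, then for every j ∈ [n'], |(A((1/k)·1 − 1(A_1)))_j| ≤ k(Δ−1). -/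
open Finset

/-- Lower-bound reduction with group sizes `(2n', 1, …, 1)`: if an allocation is
proportional up to `Δ − 1` goods for the `2n'` agents of group 1 (rows of `A` and
their conjugates) and for the single all-ones agent of each of the other `k − 1`
groups, then every coordinate of `A((1/k)·1 − 1(A_1))` is at most `k(Δ−1)` in
absolute value. -/
theorem prop_allocation_implies_weighted_discrepancy
    {n' m k Δ : ℕ} (hk : 2 ≤ k) (hΔ : 1 ≤ Δ)
    (A : Matrix (Fin n') (Fin m) ℝ)
    (hA : ∀ j ℓ, A j ℓ ∈ Set.Icc (0 : ℝ) 1)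
    (Alloc : Fin k → Finset (Fin m))
    (hpart : ∀ g : Fin m, ∃! i, g ∈ Alloc i)
    -- proportionality up to Δ−1 goods for the agents of group 1 given by rows of A
    (hprop1 : ∀ j : Fin n', ∃ B ⊆ Finset.univ \ Alloc ⟨0, by omega⟩, B.card ≤ Δ - 1 ∧
      ∑ ℓ ∈ Alloc ⟨0, by omega⟩, A j ℓ ≥ (∑ ℓ, A j ℓ) / k - ∑ ℓ ∈ B, A j ℓ)
    -- proportionality for the conjugate agents of group 1 (utilities 1 − A j ℓ)
    (hprop2 : ∀ j : Fin n', ∃ B ⊆ Finset.univ \ Alloc ⟨0, by omega⟩, B.card ≤ Δ - 1 ∧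
      ∑ ℓ ∈ Alloc ⟨0, by omega⟩, (1 - A j ℓ) ≥ (∑ ℓ : Fin m, (1 - A j ℓ)) / k - ∑ ℓ ∈ B, (1 - A j ℓ))
    -- proportionality for the all-ones agent in each group i ≠ 1
    (hprop3 : ∀ i : Fin k, i ≠ ⟨0, by omega⟩ → ∃ B ⊆ Finset.univ \ Alloc i, B.card ≤ Δ - 1 ∧
      ((Alloc i).card : ℝ) ≥ (m : ℝ) / k - (B.card : ℝ)) :
    ∀ j : Fin n',
      |(∑ ℓ, A j ℓ) / k - ∑ ℓ ∈ Alloc ⟨0, by omega⟩, A j ℓ| ≤ k * ((Δ : ℝ) - 1) := by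
  classical
  intro j
  have hk0 : (0:ℝ) < k := by exact_mod_cast (by omega : 0 < k)
  have hΔc : ((Δ - 1 : ℕ) : ℝ) = (Δ : ℝ) - 1 := by
    rw [Nat.cast_sub hΔ]; norm_num
  set i0 : Fin k := ⟨0, by omega⟩ with hi0
  set S := Alloc i0 with hS
  set s := ∑ ℓ ∈ S, A j ℓ with hsdef
  set T := ∑ ℓ, A j ℓ with hTdef
  -- bound for sums of A over small sets
  have hsumA : ∀ B : Finset (Fin m), B.card ≤ Δ - 1 → ∑ ℓ ∈ B, A j ℓ ≤ (Δ:ℝ) - 1 := by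
    intro B hB
    calc ∑ ℓ ∈ B, A j ℓ ≤ ∑ ℓ ∈ B, (1:ℝ) :=
          Finset.sum_le_sum fun ℓ _ => (hA j ℓ).2
      _ = B.card := by simp
      _ ≤ ((Δ - 1 : ℕ) : ℝ) := by exact_mod_cast hB
      _ = (Δ:ℝ) - 1 := hΔc
  have hsumA' : ∀ B : Finset (Fin m), B.card ≤ Δ - 1 →
      ∑ ℓ ∈ B, (1 - A j ℓ) ≤ (Δ:ℝ) - 1 := by
    intro B hB
    calc ∑ ℓ ∈ B, (1 - A j ℓ) ≤ ∑ ℓ ∈ B, (1:ℝ) :=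
          Finset.sum_le_sum fun ℓ _ => by linarith [(hA j ℓ).1]
      _ = B.card := by simp
      _ ≤ ((Δ - 1 : ℕ) : ℝ) := by exact_mod_cast hB
      _ = (Δ:ℝ) - 1 := hΔc
  -- inequality (1): T/k - s ≤ Δ - 1
  obtain ⟨B1, _, hB1c, hB1⟩ := hprop1 j
  have h1 : T / k - s ≤ (Δ:ℝ) - 1 := by
    have := hsumA B1 hB1c
    simp only [← hsdef, ← hTdef] at hB1
    linarith
  -- partition: sum of cards = m
  have hcards : ∑ i, (Alloc i).card = m := by
    have hf : ∀ g : Fin m, g ∈ (Finset.univ : Finset (Fin m)) →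
        (hpart g).choose ∈ (Finset.univ : Finset (Fin k)) := fun _ _ => Finset.mem_univ _
    have key := Finset.card_eq_sum_card_fiberwise hf
    rw [Finset.card_univ, Fintype.card_fin] at key
    have halloc : ∀ i : Fin k,
        Alloc i = Finset.univ.filter (fun g => (hpart g).choose = i) := by
      intro i
      ext g
      simp only [Finset.mem_filter, Finset.mem_univ, true_and]
      constructor
      · intro hg
        exact ((hpart g).choose_spec.2 i hg).symm
      · intro h; exact h ▸ (hpart g).choose_spec.1
    calc ∑ i, (Alloc i).card
        = ∑ i, (Finset.univ.filter (fun g => (hpart g).choose = i)).card :=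
          Finset.sum_congr rfl fun i _ => by rw [halloc i]
      _ = m := key.symm
  -- cards of other groups
  have hother : ∀ i : Fin k, i ≠ i0 → (m : ℝ) / k - ((Δ:ℝ) - 1) ≤ ((Alloc i).card : ℝ) := by
    intro i hi
    obtain ⟨B, _, hBc, hB⟩ := hprop3 i hi
    have : (B.card : ℝ) ≤ (Δ:ℝ) - 1 := by
      rw [← hΔc]; exact_mod_cast hBc
    linarith
  -- bound on |S|
  have hScard : ((S.card : ℝ)) ≤ (m:ℝ) / k + ((k:ℝ) - 1) * ((Δ:ℝ) - 1) := by
    have hsum : ∑ i ∈ Finset.univ.erase i0, ((Alloc i).card : ℝ)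
        = (m:ℝ) - S.card := by
      have : (S.card : ℝ) + ∑ i ∈ Finset.univ.erase i0, ((Alloc i).card : ℝ)
          = ∑ i, ((Alloc i).card : ℝ) :=
        Finset.add_sum_erase Finset.univ (fun i => (((Alloc i).card : ℝ)))
          (Finset.mem_univ i0)
      have h2 : ∑ i, ((Alloc i).card : ℝ) = (m:ℝ) := by exact_mod_cast congrArg (Nat.cast (R := ℝ)) hcards
      linarith
    have hlb : ((Finset.univ.erase i0).card : ℕ) • ((m : ℝ) / k - ((Δ:ℝ) - 1))
        ≤ ∑ i ∈ Finset.univ.erase i0, ((Alloc i).card : ℝ) :=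
      Finset.card_nsmul_le_sum _ _ _ fun i hi =>
        hother i (Finset.ne_of_mem_erase hi)
    have hce : ((Finset.univ.erase i0).card : ℕ) = k - 1 := by
      rw [Finset.card_erase_of_mem (Finset.mem_univ i0), Finset.card_univ, Fintype.card_fin]
    rw [hce, nsmul_eq_mul, hsum] at hlb
    have hkc : ((k - 1 : ℕ) : ℝ) = (k:ℝ) - 1 := by
      rw [Nat.cast_sub (by omega : 1 ≤ k)]; norm_num
    rw [hkc] at hlb
    have hkm : ((k:ℝ) - 1) * ((m:ℝ) / k) = (m:ℝ) - (m:ℝ)/k := by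
      field_simp
    nlinarith [hlb]
  -- inequality (2): s - T/k ≤ |S| - m/k + (Δ-1)
  obtain ⟨B2, _, hB2c, hB2⟩ := hprop2 j
  have h2 : s - T / k ≤ ((S.card : ℝ)) - (m:ℝ)/k + ((Δ:ℝ) - 1) := by
    have hb := hsumA' B2 hB2c
    have e1 : ∑ ℓ ∈ S, (1 - A j ℓ) = (S.card : ℝ) - s := by
      rw [Finset.sum_sub_distrib]; simp [hsdef]
    have e2 : ∑ ℓ : Fin m, (1 - A j ℓ) = (m : ℝ) - T := by
      rw [Finset.sum_sub_distrib]; simp [hTdef]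
    rw [e1, e2] at hB2
    have : ((m:ℝ) - T) / k = (m:ℝ)/k - T/k := by ring
    linarith [hB2, this]
  have hkΔ : (Δ:ℝ) - 1 ≤ (k:ℝ) * ((Δ:ℝ) - 1) := by
    have h1' : (0:ℝ) ≤ (Δ:ℝ) - 1 := by
      have : (1:ℝ) ≤ (Δ:ℝ) := by exact_mod_cast hΔ
      linarith
    have hk2 : (2:ℝ) ≤ (k:ℝ) := by exact_mod_cast hk
    nlinarith [mul_nonneg (by linarith : (0:ℝ) ≤ (k:ℝ) - 1) h1']
  rw [abs_le]
  constructor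
  · nlinarith
  · linarith
end

section
/- NO-case counting step of the set-splitting reduction: with B, C, D as above, if T ⊆ [M] and v ∈ ℝ^{|E|} with v = 1 − B·1(T), then every subset S_i unsplit by T (|S_i ∩ T| ≠ 2) contributes at least d'/4 to ‖v‖₂²; i.e., the number of unsplit subsets is at most (4/d')·‖1 − B·1(T)‖₂², where T is extended by zeros on the columns beyond [M]. -/
open Finset

/-- NO-case counting step of the set-splitting reduction: in the `d'`-regular
expander construction, each subset `S u` unsplit by `T` contributes at least
`d'/4` to `‖1 − B·1(T)‖₂²` (where `(B·1(T))_i = |S_{u_i} ∩ T|/2`), so the number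
of unsplit subsets is at most `(4/d')·‖1 − B·1(T)‖₂²`. -/
theorem set_splitting_no_case_counting
    (N M e d' : ℕ) (hd : 0 < d')
    (S : Fin N → Finset (Fin M)) (hS : ∀ u, (S u).card = 4)
    (uE vE : Fin e → Fin N)
    (hreg : ∀ u : Fin N, (Finset.univ.filter fun i : Fin e => uE i = u).card = d')
    (T : Finset (Fin M)) :
    ((Finset.univ.filter fun u : Fin N => (S u ∩ T).card ≠ 2).card : ℝ) ≤
      (4 / (d' : ℝ)) *
        ∑ i : Fin e, (1 - ((S (uE i) ∩ T).card : ℝ) / 2) ^ 2 := by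
  have hd' : (0:ℝ) < (d':ℝ) := by exact_mod_cast hd
  set f : Fin N → ℝ := fun u => if (S u ∩ T).card ≠ 2 then (1:ℝ)/4 else 0 with hf
  have key : ∀ i : Fin e, f (uE i) ≤ (1 - ((S (uE i) ∩ T).card : ℝ) / 2) ^ 2 := by
    intro i
    by_cases h : (S (uE i) ∩ T).card = 2
    · simp only [hf, h, ne_eq, not_true_eq_false, if_false]
      positivity
    · simp only [hf, h, ne_eq, not_false_eq_true, if_true]
      rcases lt_or_gt_of_ne h with h1 | h1
      · have : ((S (uE i) ∩ T).card : ℝ) ≤ 1 := by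
          exact_mod_cast Nat.lt_succ_iff.mp h1
        nlinarith
      · have : (3:ℝ) ≤ ((S (uE i) ∩ T).card : ℝ) := by exact_mod_cast h1
        nlinarith
  have hsum : ∑ i : Fin e, f (uE i) ≤ ∑ i : Fin e, (1 - ((S (uE i) ∩ T).card : ℝ) / 2) ^ 2 :=
    Finset.sum_le_sum fun i _ => key i
  have hfib : ∑ i : Fin e, f (uE i) = (d' : ℝ) * ∑ u : Fin N, f u := by
    rw [← Finset.sum_fiberwise' Finset.univ uE f, Finset.mul_sum]
    refine Finset.sum_congr rfl fun u _ => ?_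
    rw [Finset.sum_const, hreg u, nsmul_eq_mul]
  have hcount : ∑ u : Fin N, f u =
      ((Finset.univ.filter fun u : Fin N => (S u ∩ T).card ≠ 2).card : ℝ) / 4 := by
    rw [hf, Finset.sum_ite, Finset.sum_const, Finset.sum_const]
    simp [div_eq_mul_inv]
  rw [div_mul_eq_mul_div, le_div_iff₀ hd']
  nlinarith [hsum, hfib, hcount]
end
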